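/- Let c > 0 and define Φ : ℝ × (0,∞) × ℝ² → ℝ² by Φ(x₁, y₁, x₂, y₂) = (y₁x₂ + (c - x₁)y₂ - 2, x₂² + y₂² - c x₂ + ((c x₁ - x₁² - y₁²)/y₁) y₂). If C = (x_C, y_C) with y_C > 0 and c·y_C = 2, then Φ(C, C) = (0,0) and the differential of Φ in the last two variables at (C, C) has determinant (x_C - c)² + y_C², which is strictly positive. -/

import Mathlib

/-- The continuous linear map `ℝ × ℝ → ℝ × ℝ` with matrix `[[a, b], [c, d]]`. -/
noncomputable def mkCLM (a b c d : ℝ) : ℝ × ℝ →L[ℝ] ℝ × ℝ :=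
  (a • ContinuousLinearMap.fst ℝ ℝ ℝ + b • ContinuousLinearMap.snd ℝ ℝ ℝ).prod
    (c • ContinuousLinearMap.fst ℝ ℝ ℝ + d • ContinuousLinearMap.snd ℝ ℝ ℝ)

/-- The map `Φ` encoding the area-1 and concyclicity conditions. -/
noncomputable def Phi (c x₁ y₁ x₂ y₂ : ℝ) : ℝ × ℝ :=
  (y₁ * x₂ + (c - x₁) * y₂ - 2,
    x₂ ^ 2 + y₂ ^ 2 - c * x₂ + ((c * x₁ - x₁ ^ 2 - y₁ ^ 2) / y₁) * y₂)

theorem Phi_diag {c x y : ℝ} (hy : y ≠ 0) : Phi c x y x y = (c * y - 2, 0) := by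
  simp only [Phi, Prod.mk.injEq]
  constructor
  · ring
  · field_simp
    ring

theorem hasFDerivAt_Phi (c x₁ y₁ x₂ y₂ : ℝ) :
    HasFDerivAt (fun p : ℝ × ℝ => Phi c x₁ y₁ p.1 p.2)
      (mkCLM y₁ (c - x₁) (2 * x₂ - c) (2 * y₂ + (c * x₁ - x₁ ^ 2 - y₁ ^ 2) / y₁))
      (x₂, y₂) := by
  have hfst : HasFDerivAt (fun p : ℝ × ℝ => p.1) (ContinuousLinearMap.fst ℝ ℝ ℝ) (x₂, y₂) :=
    hasFDerivAt_fst
  have hsnd : HasFDerivAt (fun p : ℝ × ℝ => p.2) (ContinuousLinearMap.snd ℝ ℝ ℝ) (x₂, y₂) :=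
    hasFDerivAt_snd
  refine HasFDerivAt.prodMk ?_ ?_
  · exact ((hfst.const_mul y₁).add (hsnd.const_mul (c - x₁))).sub_const 2
  · refine ((((hfst.pow 2).add (hsnd.pow 2)).sub (hfst.const_mul c)).add
      (hsnd.const_mul _)).congr_fderiv ?_
    ext <;> simp

theorem Phi_diag_det_eq {c x y : ℝ} (hy : y ≠ 0) :
    y * ((-x ^ 2 + c * x + y ^ 2) / y) - (c - x) * (2 * x - c) = (x - c) ^ 2 + y ^ 2 := by
  field_simp
  ring

theorem Phi_fixed_point_and_second_differential_general (c xC yC : ℝ)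
    (hy : 0 < yC) (harea : c * yC = 2) :
    Phi c xC yC xC yC = (0, 0) ∧
    HasFDerivAt (fun p : ℝ × ℝ => Phi c xC yC p.1 p.2)
      (mkCLM yC (c - xC) (2 * xC - c) ((-xC ^ 2 + c * xC + yC ^ 2) / yC)) (xC, yC) ∧
    yC * ((-xC ^ 2 + c * xC + yC ^ 2) / yC) - (c - xC) * (2 * xC - c) =
      (xC - c) ^ 2 + yC ^ 2 ∧
    0 < (xC - c) ^ 2 + yC ^ 2 := by
  have hy0 : yC ≠ 0 := hy.ne'
  have hentry :
      2 * yC + (c * xC - xC ^ 2 - yC ^ 2) / yC = (-xC ^ 2 + c * xC + yC ^ 2) / yC := by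
    field_simp
    ring
  refine ⟨by rw [Phi_diag hy0, harea, sub_self], ?_, Phi_diag_det_eq hy0, by positivity⟩
  simpa only [hentry] using hasFDerivAt_Phi c xC yC xC yC

/-- If `C = (x_C, y_C)` with `y_C > 0` and `c y_C = 2`, then `Φ(C, C) = (0,0)`, the
differential of `Φ` in the last two variables at `(C, C)` is the linear map with matrix
`[[y_C, c - x_C], [2x_C - c, (-x_C² + c x_C + y_C²)/y_C]]`, and its determinant equals
`(x_C - c)² + y_C²`, which is strictly positive. -/
theorem Phi_fixed_point_and_second_differential (c xC yC : ℝ) (hc : 0 < c)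
    (hy : 0 < yC) (harea : c * yC = 2) :
    Phi c xC yC xC yC = (0, 0) ∧
    HasFDerivAt (fun p : ℝ × ℝ => Phi c xC yC p.1 p.2)
      (mkCLM yC (c - xC) (2 * xC - c) ((-xC ^ 2 + c * xC + yC ^ 2) / yC)) (xC, yC) ∧
    yC * ((-xC ^ 2 + c * xC + yC ^ 2) / yC) - (c - xC) * (2 * xC - c) =
      (xC - c) ^ 2 + yC ^ 2 ∧
    0 < (xC - c) ^ 2 + yC ^ 2 :=
  Phi_fixed_point_and_second_differential_general c xC yC hy harea
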